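/- arXiv:1010.4672 — 2 statements merged into one kernel-verified Lean document; each statement's English description precedes it below -/
import Mathlib

section
/- With T₁ ∼_ε T₂, let S*_{2,Cε} be a time-optimal controller for T₂ and specification (C_ε(O_s), C_ε(O_t)), and let S₁ be its concretization via argmin over R of the abstract entry time. Then for all q₁ ∈ Q₁: J*(T₁, O_s, O_t, q₁) ≤ J(T_{1,S₁}, O_s, O_t, q₁) ≤ J*(T₁, C_{2ε}(O_s), C_{2ε}(O_t), q₁). -/
open Set

/-- φ-contraction of a set in a metric space. -/
def contr {O : Type*} [MetricSpace O] (φ : ℝ) (s : Set O) : Set O :=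
  {o' | o' ∈ s ∧ ∀ o : O, dist o o' ≤ φ → o ∈ s}

/-- φ-expansion of a set in a metric space. -/
def expan {O : Type*} [MetricSpace O] (φ : ℝ) (s : Set O) : Set O :=
  {o : O | ∃ o' ∈ s, dist o o' ≤ φ}

/-- Enabled actions of a transition system given by δ. -/
def Enab {Q L : Type*} (δ : Q → L → Set Q) (q : Q) : Set L := {l | (δ q l).Nonempty}

/-- A trajectory of length N of the controlled system T_S. -/
def IsTraj {Q L : Type*} (δ : Q → L → Set Q) (S : Q → Set L) (N : ℕ)
    (q : ℕ → Q) (l : ℕ → L) : Prop :=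
  ∀ i < N, l i ∈ S (q i) ∧ q (i + 1) ∈ δ (q i) (l i)

/-- ε-approximate bisimulation relation. -/
def ApproxBisim {Q₁ Q₂ L O : Type*} [MetricSpace O] (ε : ℝ)
    (δ₁ : Q₁ → L → Set Q₁) (H₁ : Q₁ → O)
    (δ₂ : Q₂ → L → Set Q₂) (H₂ : Q₂ → O) (R : Set (Q₁ × Q₂)) : Prop :=
  ∀ p ∈ R, dist (H₁ p.1) (H₂ p.2) ≤ ε ∧
    (∀ l : L, ∀ q₁' ∈ δ₁ p.1 l, ∃ q₂' ∈ δ₂ p.2 l, (q₁', q₂') ∈ R) ∧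
    (∀ l : L, ∀ q₂' ∈ δ₂ p.2 l, ∃ q₁' ∈ δ₁ p.1 l, (q₁', q₂') ∈ R)

/-- Safety controller (characterization of Lemma 3.1). -/
def SafetyController {Q L O : Type*} (δ : Q → L → Set Q) (H : Q → O)
    (S : Q → Set L) (Os : Set O) : Prop :=
  ∀ q : Q, (S q).Nonempty → H q ∈ Os ∧ ∀ l ∈ S q, ∀ q' ∈ δ q l, (S q').Nonempty

/-- The reachability condition on a trajectory of length N. -/
def Reached {Q O : Type*} (H : Q → O) (Os Ot : Set O) (N : ℕ) (q : ℕ → Q) : Prop :=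
  ∃ K ≤ N, (∀ k ≤ K, H (q k) ∈ Os) ∧ H (q K) ∈ Ot

/-- Entry time of the controlled system T_S from q₀ for specification (Os, Ot). -/
noncomputable def entryTime {Q L O : Type*} (δ : Q → L → Set Q) (S : Q → Set L)
    (H : Q → O) (Os Ot : Set O) (q₀ : Q) : ℕ∞ :=
  sInf {n : ℕ∞ | ∃ N : ℕ, n = (N : ℕ∞) ∧
    ∀ (q : ℕ → Q) (l : ℕ → L), q 0 = q₀ → IsTraj δ S N q l → Reached H Os Ot N q}

/-- An everywhere non-empty, well-defined controller. -/
def IsController {Q L : Type*} (δ : Q → L → Set Q) (S : Q → Set L) : Prop :=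
  (∀ q, (S q).Nonempty) ∧ ∀ q, S q ⊆ Enab δ q

/-- Time-optimal controller for reachability specification (Os, Ot). -/
def TimeOptimal {Q L O : Type*} (δ : Q → L → Set Q) (H : Q → O) (S : Q → Set L)
    (Os Ot : Set O) : Prop :=
  IsController δ S ∧ ∀ S' : Q → Set L, IsController δ S' →
    ∀ q, entryTime δ S H Os Ot q ≤ entryTime δ S' H Os Ot q

/-- Maximal safety controller. -/
def MaximalSafety {Q L O : Type*} (δ : Q → L → Set Q) (H : Q → O) (S : Q → Set L)
    (Os : Set O) : Prop :=
  SafetyController δ H S Os ∧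
    ∀ S' : Q → Set L, SafetyController δ H S' Os → ∀ q, S' q ⊆ S q

/-- ε-approximate bisimilarity of two transition systems. -/
def ApproxBisimilar {Q₁ Q₂ L O : Type*} [MetricSpace O] (ε : ℝ)
    (δ₁ : Q₁ → L → Set Q₁) (H₁ : Q₁ → O)
    (δ₂ : Q₂ → L → Set Q₂) (H₂ : Q₂ → O) : Prop :=
  ∃ R : Set (Q₁ × Q₂), ApproxBisim ε δ₁ H₁ δ₂ H₂ R ∧
    (∀ q₁, ∃ q₂, (q₁, q₂) ∈ R) ∧ (∀ q₂, ∃ q₁, (q₁, q₂) ∈ R)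

/-! ### Auxiliary lemmas -/

section Aux

variable {Q L O : Type*} [MetricSpace O]

set_option linter.unusedSectionVars false

/-- All trajectories of length `N` of `T_S` from `q₀` reach `(Os, Ot)` within `N`. -/
def AllReach (δ : Q → L → Set Q) (S : Q → Set L) (H : Q → O) (Os Ot : Set O)
    (q₀ : Q) (N : ℕ) : Prop :=
  ∀ (q : ℕ → Q) (l : ℕ → L), q 0 = q₀ → IsTraj δ S N q l → Reached H Os Ot N q

lemma AllReach.mono {δ : Q → L → Set Q} {S : Q → Set L} {H : Q → O} {Os Ot : Set O}
    {q₀ : Q} {N M : ℕ} (h : AllReach δ S H Os Ot q₀ N) (hNM : N ≤ M) :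
    AllReach δ S H Os Ot q₀ M := by
  intro q l hq0 htraj
  obtain ⟨K, hK, hs, ht⟩ := h q l hq0 (fun i hi => htraj i (by omega))
  exact ⟨K, by omega, hs, ht⟩

lemma entryTime_le_of_allReach {δ : Q → L → Set Q} {S : Q → Set L} {H : Q → O}
    {Os Ot : Set O} {q₀ : Q} {N : ℕ} (h : AllReach δ S H Os Ot q₀ N) :
    entryTime δ S H Os Ot q₀ ≤ (N : ℕ∞) :=
  sInf_le ⟨N, rfl, h⟩

lemma allReach_of_entryTime_le {δ : Q → L → Set Q} {S : Q → Set L} {H : Q → O}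
    {Os Ot : Set O} {q₀ : Q} {N : ℕ}
    (h : entryTime δ S H Os Ot q₀ ≤ (N : ℕ∞)) : AllReach δ S H Os Ot q₀ N := by
  set A : Set ℕ∞ := {n : ℕ∞ | ∃ N' : ℕ, n = (N' : ℕ∞) ∧
    ∀ (q : ℕ → Q) (l : ℕ → L), q 0 = q₀ → IsTraj δ S N' q l → Reached H Os Ot N' q} with hA
  have hEq : entryTime δ S H Os Ot q₀ = sInf A := rfl
  have hne : A.Nonempty := by
    by_contra hA'
    rw [Set.not_nonempty_iff_eq_empty] at hA'
    rw [hEq, hA', sInf_empty] at h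
    exact (ENat.coe_lt_top N).not_ge h
  obtain ⟨m, hmA, hmin⟩ := wellFounded_lt.has_min A hne
  have hm_le : m ≤ (N : ℕ∞) :=
    le_trans (le_trans (le_sInf fun x hx => not_lt.1 (hmin x hx)) (le_of_eq hEq.symm)) h
  obtain ⟨N', rfl, hP⟩ := hmA
  exact AllReach.mono hP (by exact_mod_cast hm_le)

lemma exists_traj {δ : Q → L → Set Q} {S : Q → Set L} (h : IsController δ S) (q₀ : Q) :
    ∃ (q : ℕ → Q) (l : ℕ → L), q 0 = q₀ ∧ ∀ N, IsTraj δ S N q l := by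
  choose lf hlf using h.1
  have hδ : ∀ q, (δ q (lf q)).Nonempty := fun q => h.2 q (hlf q)
  choose nx hnx using hδ
  refine ⟨fun n => nx^[n] q₀, fun n => lf (nx^[n] q₀), rfl, ?_⟩
  intro N i _
  refine ⟨hlf _, ?_⟩
  show nx^[i + 1] q₀ ∈ δ (nx^[i] q₀) (lf (nx^[i] q₀))
  rw [Function.iterate_succ_apply']
  exact hnx _

lemma AllReach.safeStart {δ : Q → L → Set Q} {S : Q → Set L} {H : Q → O} {Os Ot : Set O}
    {q₀ : Q} {N : ℕ} (hS : IsController δ S) (h : AllReach δ S H Os Ot q₀ N) :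
    H q₀ ∈ Os := by
  obtain ⟨q, l, hq0, htraj⟩ := exists_traj hS q₀
  obtain ⟨K, hK, hs, ht⟩ := h q l hq0 (htraj N)
  have := hs 0 (Nat.zero_le _)
  rwa [hq0] at this

lemma AllReach.target0 {δ : Q → L → Set Q} {S : Q → Set L} {H : Q → O} {Os Ot : Set O}
    {q₀ : Q} (hS : IsController δ S) (h : AllReach δ S H Os Ot q₀ 0) : H q₀ ∈ Ot := by
  obtain ⟨q, l, hq0, htraj⟩ := exists_traj hS q₀
  obtain ⟨K, hK, hs, ht⟩ := h q l hq0 (htraj 0)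
  obtain rfl := Nat.le_zero.1 hK
  rwa [hq0] at ht

lemma AllReach.step {δ : Q → L → Set Q} {S : Q → Set L} {H : Q → O} {Cs Ct : Set O}
    {q₀ : Q} {N : ℕ} (h : AllReach δ S H Cs Ct q₀ (N + 1))
    (hct : H q₀ ∉ Ct) {l₀ : L} (hl : l₀ ∈ S q₀) {q₁ : Q} (hq : q₁ ∈ δ q₀ l₀) :
    AllReach δ S H Cs Ct q₁ N := by
  intro q l hq0 htraj
  have hfull : IsTraj δ S (N + 1) (fun n => match n with | 0 => q₀ | Nat.succ k => q k)
      (fun n => match n with | 0 => l₀ | Nat.succ k => l k) := by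
    intro i hi
    cases i with
    | zero =>
      refine ⟨hl, ?_⟩
      show q 0 ∈ δ q₀ l₀
      rw [hq0]; exact hq
    | succ k =>
      exact htraj k (by omega)
  obtain ⟨K, hKle, hsafe, htgt⟩ := h _ _ rfl hfull
  cases K with
  | zero => exact absurd htgt hct
  | succ K =>
    exact ⟨K, by omega, fun k hk => hsafe (k + 1) (by omega), htgt⟩

lemma contr_mono {φ : ℝ} {s t : Set O} (hst : s ⊆ t) : contr φ s ⊆ contr φ t :=
  fun o' ho' => ⟨hst ho'.1, fun o hd => hst (ho'.2 o hd)⟩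

/-- Main concretization bound (Theorem 4.1 in abstract form). -/
lemma concretize_le {Q₁ Q₂ : Type*} (ε : ℝ)
    (δ₁ : Q₁ → L → Set Q₁) (H₁ : Q₁ → O) (δ₂ : Q₂ → L → Set Q₂) (H₂ : Q₂ → O)
    (R : Set (Q₁ × Q₂)) (hR : ApproxBisim ε δ₁ H₁ δ₂ H₂ R)
    (Os Ot Cs Ct : Set O) (hOts : Ot ⊆ Os)
    (hCt : ∀ o o' : O, o' ∈ Ct → dist o o' ≤ ε → o ∈ Ot)
    (hCs : ∀ o o' : O, o' ∈ Cs → dist o o' ≤ ε → o ∈ Os)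
    (S₂ : Q₂ → Set L) (hS₂c : IsController δ₂ S₂)
    (c : Q₁ → Q₂)
    (hc : ∀ q₁, (q₁, c q₁) ∈ R ∧ ∀ q₂, (q₁, q₂) ∈ R →
      entryTime δ₂ S₂ H₂ Cs Ct (c q₁) ≤ entryTime δ₂ S₂ H₂ Cs Ct q₂) :
    ∀ q₁, entryTime δ₁ (fun q => S₂ (c q)) H₁ Os Ot q₁ ≤
      entryTime δ₂ S₂ H₂ Cs Ct (c q₁) := by
  have key : ∀ N : ℕ, ∀ q₁ : Q₁, AllReach δ₂ S₂ H₂ Cs Ct (c q₁) N →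
      AllReach δ₁ (fun q => S₂ (c q)) H₁ Os Ot q₁ N := by
    intro N
    induction N with
    | zero =>
      intro q₁ h q l hq0 _
      have h1 : H₁ q₁ ∈ Ot := hCt _ _ (h.target0 hS₂c) (hR _ (hc q₁).1).1
      refine ⟨0, le_refl _, ?_, by rw [hq0]; exact h1⟩
      intro k hk
      obtain rfl := Nat.le_zero.1 hk
      rw [hq0]; exact hOts h1
    | succ N ih =>
      intro q₁ h q l hq0 htraj
      by_cases hct : H₂ (c q₁) ∈ Ct
      · have h1 : H₁ q₁ ∈ Ot := hCt _ _ hct (hR _ (hc q₁).1).1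
        refine ⟨0, Nat.zero_le _, ?_, by rw [hq0]; exact h1⟩
        intro k hk
        obtain rfl := Nat.le_zero.1 hk
        rw [hq0]; exact hOts h1
      · have hstep := htraj 0 (Nat.succ_pos N)
        have hl0 : l 0 ∈ S₂ (c q₁) := by rw [← hq0]; exact hstep.1
        have hq1δ : q 1 ∈ δ₁ q₁ (l 0) := by rw [← hq0]; exact hstep.2
        obtain ⟨q₂', hq₂'δ, hq₂'R⟩ := (hR _ (hc q₁).1).2.1 (l 0) (q 1) hq1δ
        have hAR' : AllReach δ₂ S₂ H₂ Cs Ct q₂' N := h.step hct hl0 hq₂'δ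
        have hle : entryTime δ₂ S₂ H₂ Cs Ct (c (q 1)) ≤ (N : ℕ∞) :=
          le_trans ((hc (q 1)).2 q₂' hq₂'R) (entryTime_le_of_allReach hAR')
        have hsub : AllReach δ₁ (fun q => S₂ (c q)) H₁ Os Ot (q 1) N :=
          ih (q 1) (allReach_of_entryTime_le hle)
        obtain ⟨K, hKle, hsafe, htgt⟩ := hsub (fun n => q (n + 1)) (fun n => l (n + 1)) rfl
          (fun i hi => htraj (i + 1) (by omega))
        have hq0s : H₁ q₁ ∈ Os := hCs _ _ (h.safeStart hS₂c) (hR _ (hc q₁).1).1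
        refine ⟨K + 1, by omega, ?_, htgt⟩
        intro k hk
        cases k with
        | zero => rw [hq0]; exact hq0s
        | succ k => exact hsafe k (by omega)
  intro q₁
  apply le_sInf
  rintro n ⟨N, rfl, hP⟩
  exact entryTime_le_of_allReach (key N q₁ hP)

end Aux

theorem suboptimality_contraction {Q₁ Q₂ L O : Type*} [MetricSpace O]
    (ε : ℝ) (hε : 0 ≤ ε) (δ₁ : Q₁ → L → Set Q₁) (H₁ : Q₁ → O)
    (δ₂ : Q₂ → L → Set Q₂) (H₂ : Q₂ → O) (R : Set (Q₁ × Q₂))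
    (hR : ApproxBisim ε δ₁ H₁ δ₂ H₂ R)
    (hRtot₁ : ∀ q₁, ∃ q₂, (q₁, q₂) ∈ R) (hRtot₂ : ∀ q₂, ∃ q₁, (q₁, q₂) ∈ R)
    (hnb₁ : ∀ q : Q₁, ∃ l : L, (δ₁ q l).Nonempty)
    (hnb₂ : ∀ q : Q₂, ∃ l : L, (δ₂ q l).Nonempty)
    (Os Ot : Set O) (hOts : Ot ⊆ Os)
    (S₂ : Q₂ → Set L) (hS₂ : TimeOptimal δ₂ H₂ S₂ (contr ε Os) (contr ε Ot))
    (c : Q₁ → Q₂)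
    (hc : ∀ q₁, (q₁, c q₁) ∈ R ∧ ∀ q₂, (q₁, q₂) ∈ R →
      entryTime δ₂ S₂ H₂ (contr ε Os) (contr ε Ot) (c q₁) ≤
      entryTime δ₂ S₂ H₂ (contr ε Os) (contr ε Ot) q₂)
    (Sopt : Q₁ → Set L) (hSopt : TimeOptimal δ₁ H₁ Sopt Os Ot)
    (SoptC2 : Q₁ → Set L)
    (hSoptC2 : TimeOptimal δ₁ H₁ SoptC2 (contr (2 * ε) Os) (contr (2 * ε) Ot)) :
    ∀ q₁ : Q₁,
      entryTime δ₁ Sopt H₁ Os Ot q₁ ≤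
        entryTime δ₁ (fun q => S₂ (c q)) H₁ Os Ot q₁ ∧
      entryTime δ₁ (fun q => S₂ (c q)) H₁ Os Ot q₁ ≤
        entryTime δ₁ SoptC2 H₁ (contr (2 * ε) Os) (contr (2 * ε) Ot) q₁ := by
  -- flipped relation
  set R' : Set (Q₂ × Q₁) := {p | (p.2, p.1) ∈ R} with hR'def
  have hR' : ApproxBisim ε δ₂ H₂ δ₁ H₁ R' := by
    intro p hp
    obtain ⟨hd, h1, h2⟩ := hR (p.2, p.1) hp
    exact ⟨by rw [dist_comm]; exact hd, h2, h1⟩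
  -- the concretized controller on T₁ is a controller
  have hS1ctrl : IsController δ₁ (fun q => S₂ (c q)) := by
    refine ⟨fun q => hS₂.1.1 (c q), fun q l hl => ?_⟩
    obtain ⟨q₂', hq₂'⟩ := hS₂.1.2 (c q) hl
    obtain ⟨q₁', hq₁', -⟩ := (hR _ (hc q).1).2.2 l q₂' hq₂'
    exact ⟨q₁', hq₁'⟩
  -- argmin map d : Q₂ → Q₁ for the abstract optimal controller SoptC2
  have hdex : ∀ q₂ : Q₂, ∃ q₁, (q₁, q₂) ∈ R ∧ ∀ q₁', (q₁', q₂) ∈ R →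
      entryTime δ₁ SoptC2 H₁ (contr (2 * ε) Os) (contr (2 * ε) Ot) q₁ ≤
      entryTime δ₁ SoptC2 H₁ (contr (2 * ε) Os) (contr (2 * ε) Ot) q₁' := by
    intro q₂
    obtain ⟨q₀, hq₀⟩ := hRtot₂ q₂
    have hne : ((fun q₁ => entryTime δ₁ SoptC2 H₁ (contr (2 * ε) Os) (contr (2 * ε) Ot) q₁) ''
        {q₁ | (q₁, q₂) ∈ R}).Nonempty := ⟨_, q₀, hq₀, rfl⟩
    obtain ⟨v, ⟨q₁, hq₁, rfl⟩, hmin⟩ := wellFounded_lt.has_min _ hne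
    exact ⟨q₁, hq₁, fun q₁' h' => not_lt.1 (hmin _ ⟨q₁', h', rfl⟩)⟩
  choose d hd using hdex
  -- the concretized controller on T₂ is a controller
  have hS2'ctrl : IsController δ₂ (fun q => SoptC2 (d q)) := by
    refine ⟨fun q => hSoptC2.1.1 (d q), fun q l hl => ?_⟩
    obtain ⟨q₁', hq₁'⟩ := hSoptC2.1.2 (d q) hl
    obtain ⟨q₂', hq₂', -⟩ := (hR _ (hd q).1).2.1 l q₁' hq₁'
    exact ⟨q₂', hq₂'⟩
  -- first concretization bound
  have lemG1 : ∀ q₁, entryTime δ₁ (fun q => S₂ (c q)) H₁ Os Ot q₁ ≤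
      entryTime δ₂ S₂ H₂ (contr ε Os) (contr ε Ot) (c q₁) :=
    concretize_le ε δ₁ H₁ δ₂ H₂ R hR Os Ot (contr ε Os) (contr ε Ot) hOts
      (fun o o' ho' hdist => ho'.2 o hdist)
      (fun o o' ho' hdist => ho'.2 o hdist)
      S₂ hS₂.1 c hc
  -- second (symmetric) concretization bound
  have hCt2 : ∀ o o' : O, o' ∈ contr (2 * ε) Ot → dist o o' ≤ ε → o ∈ contr ε Ot := by
    intro o o' ho' hdist
    refine ⟨ho'.2 o (by linarith), fun x hx => ho'.2 x ?_⟩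
    calc dist x o' ≤ dist x o + dist o o' := dist_triangle _ _ _
      _ ≤ 2 * ε := by linarith
  have hCs2 : ∀ o o' : O, o' ∈ contr (2 * ε) Os → dist o o' ≤ ε → o ∈ contr ε Os := by
    intro o o' ho' hdist
    refine ⟨ho'.2 o (by linarith), fun x hx => ho'.2 x ?_⟩
    calc dist x o' ≤ dist x o + dist o o' := dist_triangle _ _ _
      _ ≤ 2 * ε := by linarith
  have lemG2 : ∀ q₂, entryTime δ₂ (fun q => SoptC2 (d q)) H₂ (contr ε Os) (contr ε Ot) q₂ ≤
      entryTime δ₁ SoptC2 H₁ (contr (2 * ε) Os) (contr (2 * ε) Ot) (d q₂) :=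
    concretize_le ε δ₂ H₂ δ₁ H₁ R' hR' (contr ε Os) (contr ε Ot)
      (contr (2 * ε) Os) (contr (2 * ε) Ot) (contr_mono hOts) hCt2 hCs2
      SoptC2 hSoptC2.1 d (fun q₂ => ⟨(hd q₂).1, fun q₁' h' => (hd q₂).2 q₁' h'⟩)
  intro q₁
  refine ⟨hSopt.2 (fun q => S₂ (c q)) hS1ctrl q₁, ?_⟩
  calc entryTime δ₁ (fun q => S₂ (c q)) H₁ Os Ot q₁
      ≤ entryTime δ₂ S₂ H₂ (contr ε Os) (contr ε Ot) (c q₁) := lemG1 q₁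
    _ ≤ entryTime δ₂ (fun q => SoptC2 (d q)) H₂ (contr ε Os) (contr ε Ot) (c q₁) :=
        hS₂.2 _ hS2'ctrl (c q₁)
    _ ≤ entryTime δ₁ SoptC2 H₁ (contr (2 * ε) Os) (contr (2 * ε) Ot) (d (c q₁)) :=
        lemG2 (c q₁)
    _ ≤ entryTime δ₁ SoptC2 H₁ (contr (2 * ε) Os) (contr (2 * ε) Ot) q₁ :=
        (hd (c q₁)).2 q₁ (hc q₁).1
end

section
/- For ε-approximately bisimilar systems T₁ ∼_ε T₂ via R, the time-optimal value functions for ε-contracted/expanded specifications transfer across R: for all (q₁, q₂) ∈ R, J*(T₁, O_s, O_t, q₁) ≤ J*(T₂, C_ε(O_s), C_ε(O_t), q₂) and J*(T₂, E_ε(O_s), E_ε(O_t), q₂) ≤ J*(T₁, O_s, O_t, q₁). -/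
/-!
Both inequalities are instances of one transfer principle. Let `r` relate states of `T_A` to
states of `T_B` so that moves of `T_A` are matched by `T_B`, enabled actions of `T_B` are enabled
in `T_A`, and safe/target observations of `b` make those of `a` safe/target. Given a controller
`S_B` of `T_B`, let each state `a` act as its `r`-related state `f a` of least entry time does.
By induction on `N`, if all runs of length `N` from `f a` meet the specification then so do all
runs of length `N` of the pulled-back controller from `a`; hence `J_A(a) ≤ J_B(f a) ≤ J_B(b)`
whenever `r a b`, and time-optimality bounds `J*` by this controller. An ε-approximate
bisimulation is such a relation from `T₁` to `T₂` with contracted specifications on `T₂`, and its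
converse is one from `T₂` to `T₁` with expanded specifications on `T₂`.
-/

open Set

section Reachability

variable {Q L O : Type*} {δ : Q → L → Set Q} {S : Q → Set L} {H : Q → O} {Os Ot : Set O}

/-- `entryTime δ S H Os Ot q₀` is the least `N` with `ReachesWithin δ S H Os Ot N q₀`. -/
def ReachesWithin (δ : Q → L → Set Q) (S : Q → Set L) (H : Q → O) (Os Ot : Set O)
    (N : ℕ) (q₀ : Q) : Prop :=
  ∀ (q : ℕ → Q) (l : ℕ → L), q 0 = q₀ → IsTraj δ S N q l → Reached H Os Ot N q

theorem IsController.exists_isTraj (hS : IsController δ S) (q₀ : Q) :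
    ∃ (q : ℕ → Q) (l : ℕ → L), q 0 = q₀ ∧ ∀ N, IsTraj δ S N q l := by
  have hstep : ∀ q, ∃ l ∈ S q, (δ q l).Nonempty :=
    fun q => (hS.1 q).imp fun l hl => ⟨hl, hS.2 q hl⟩
  choose act hact next hnext using hstep
  let q : ℕ → Q := fun i => Nat.rec q₀ (fun _ p => next p) i
  exact ⟨q, fun i => act (q i), rfl, fun _ i _ => ⟨hact _, hnext _⟩⟩

theorem ReachesWithin.mono {m n : ℕ} {q₀ : Q} (hmn : m ≤ n)
    (h : ReachesWithin δ S H Os Ot m q₀) : ReachesWithin δ S H Os Ot n q₀ := by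
  intro q l hq₀ htraj
  obtain ⟨K, hK, hsafe, htarget⟩ := h q l hq₀ fun i hi => htraj i (hi.trans_le hmn)
  exact ⟨K, hK.trans hmn, hsafe, htarget⟩

theorem reachesWithin_of_mem_target {q₀ : Q} (hs : H q₀ ∈ Os) (ht : H q₀ ∈ Ot) (N : ℕ) :
    ReachesWithin δ S H Os Ot N q₀ := by
  rintro q l rfl -
  exact ⟨0, N.zero_le, fun k hk => by rwa [Nat.le_zero.mp hk], ht⟩

theorem reachesWithin_succ_of_forall {q₀ : Q} {n : ℕ} (hs : H q₀ ∈ Os)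
    (hnext : ∀ l ∈ S q₀, ∀ q' ∈ δ q₀ l, ReachesWithin δ S H Os Ot n q') :
    ReachesWithin δ S H Os Ot (n + 1) q₀ := by
  rintro q l rfl htraj
  obtain ⟨K, hK, hsafe, htarget⟩ := hnext (l 0) (htraj 0 n.succ_pos).1 (q 1)
    (htraj 0 n.succ_pos).2 (fun i => q (i + 1)) (fun i => l (i + 1)) rfl
    fun i hi => htraj (i + 1) (Nat.succ_lt_succ hi)
  refine ⟨K + 1, Nat.succ_le_succ hK, fun k hk => ?_, htarget⟩
  cases k with
  | zero => exact hs
  | succ j => exact hsafe j (Nat.succ_le_succ_iff.mp hk)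

theorem ReachesWithin.mem_safe (hS : IsController δ S) {n : ℕ} {q₀ : Q}
    (h : ReachesWithin δ S H Os Ot n q₀) : H q₀ ∈ Os := by
  obtain ⟨q, l, rfl, htraj⟩ := hS.exists_isTraj q₀
  obtain ⟨K, -, hsafe, -⟩ := h q l rfl (htraj n)
  exact hsafe 0 K.zero_le

theorem ReachesWithin.mem_target_of_zero (hS : IsController δ S) {q₀ : Q}
    (h : ReachesWithin δ S H Os Ot 0 q₀) : H q₀ ∈ Ot := by
  obtain ⟨q, l, rfl, htraj⟩ := hS.exists_isTraj q₀
  obtain ⟨K, hK, -, htarget⟩ := h q l rfl (htraj 0)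
  rwa [Nat.le_zero.mp hK] at htarget

theorem ReachesWithin.of_succ {n : ℕ} {q₀ q' : Q} {a : L}
    (h : ReachesWithin δ S H Os Ot (n + 1) q₀) (hnt : H q₀ ∉ Ot) (ha : a ∈ S q₀)
    (hq' : q' ∈ δ q₀ a) : ReachesWithin δ S H Os Ot n q' := by
  rintro q l rfl htraj
  let run : ℕ → Q := fun i => Nat.casesOn i q₀ q
  let acts : ℕ → L := fun i => Nat.casesOn i a l
  have hrun : IsTraj δ S (n + 1) run acts := fun i hi => by
    cases i with
    | zero => exact ⟨ha, hq'⟩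
    | succ j => exact htraj j (Nat.succ_lt_succ_iff.mp hi)
  obtain ⟨K, hK, hsafe, htarget⟩ := h run acts rfl hrun
  cases K with
  | zero => exact absurd htarget hnt
  | succ K =>
    exact ⟨K, Nat.succ_le_succ_iff.mp hK, fun k hk => hsafe (k + 1) (Nat.succ_le_succ hk),
      htarget⟩

theorem entryTime_le_coe_iff {q₀ : Q} {n : ℕ} :
    entryTime δ S H Os Ot q₀ ≤ n ↔ ReachesWithin δ S H Os Ot n q₀ := by
  refine ⟨fun h => ?_, fun h => sInf_le ⟨n, rfl, h⟩⟩
  change sInf {m : ℕ∞ | ∃ N : ℕ, m = N ∧ ReachesWithin δ S H Os Ot N q₀} ≤ n at h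
  have hne : {m : ℕ∞ | ∃ N : ℕ, m = N ∧ ReachesWithin δ S H Os Ot N q₀}.Nonempty := by
    by_contra hempty
    rw [Set.not_nonempty_iff_eq_empty] at hempty
    simp [hempty] at h
  obtain ⟨N, hN, hreach⟩ := csInf_mem hne
  rw [hN] at h
  exact hreach.mono (by exact_mod_cast h)

end Reachability

theorem entryTime_le_of_forall_reachesWithin {Q Q' L O : Type*}
    {δ : Q → L → Set Q} {S : Q → Set L} {H : Q → O} {Os Ot : Set O} {q₀ : Q}
    {δ' : Q' → L → Set Q'} {S' : Q' → Set L} {H' : Q' → O} {Os' Ot' : Set O} {q₀' : Q'}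
    (h : ∀ n, ReachesWithin δ' S' H' Os' Ot' n q₀' → ReachesWithin δ S H Os Ot n q₀) :
    entryTime δ S H Os Ot q₀ ≤ entryTime δ' S' H' Os' Ot' q₀' :=
  sInf_le_sInf fun _ ⟨N, hm, hN⟩ => ⟨N, hm, h N hN⟩

section Simulation

variable {QA QB L O : Type*} {δA : QA → L → Set QA} {HA : QA → O}
  {δB : QB → L → Set QB} {HB : QB → O} {OsA OtA OsB OtB : Set O}

theorem exists_isController_entryTime_le (r : QA → QB → Prop)
    (hsafe : ∀ a b, r a b → HB b ∈ OsB → HA a ∈ OsA)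
    (htarget : ∀ a b, r a b → HB b ∈ OtB → HA a ∈ OtA)
    (hforth : ∀ a b, r a b → ∀ l, ∀ a' ∈ δA a l, ∃ b' ∈ δB b l, r a' b')
    (henab : ∀ a b, r a b → ∀ l, (δB b l).Nonempty → (δA a l).Nonempty)
    (htot : ∀ a, ∃ b, r a b) {SB : QB → Set L} (hSB : IsController δB SB) :
    ∃ SA : QA → Set L, IsController δA SA ∧
      ∀ a b, r a b → entryTime δA SA HA OsA OtA a ≤ entryTime δB SB HB OsB OtB b := by
  let f : QA → QB := fun a => Function.argminOn (entryTime δB SB HB OsB OtB) {b | r a b} (htot a)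
  have hf : ∀ a, r a (f a) := fun a => Function.argminOn_mem _ _ _
  have hf_le : ∀ a b, r a b → entryTime δB SB HB OsB OtB (f a) ≤ entryTime δB SB HB OsB OtB b :=
    fun a _ hab => Function.argminOn_le _ {b | r a b} hab
  let SA : QA → Set L := fun a => SB (f a)
  have hSA : IsController δA SA :=
    ⟨fun a => hSB.1 (f a), fun a _ hl => henab a (f a) (hf a) _ (hSB.2 (f a) hl)⟩
  have hreach : ∀ n a, ReachesWithin δB SB HB OsB OtB n (f a) →
      ReachesWithin δA SA HA OsA OtA n a := by
    intro n
    induction n with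
    | zero =>
      intro a h
      exact reachesWithin_of_mem_target (hsafe _ _ (hf a) (h.mem_safe hSB))
        (htarget _ _ (hf a) (h.mem_target_of_zero hSB)) 0
    | succ n ih =>
      intro a h
      have hs : HA a ∈ OsA := hsafe _ _ (hf a) (h.mem_safe hSB)
      by_cases ht : HB (f a) ∈ OtB
      · exact reachesWithin_of_mem_target hs (htarget _ _ (hf a) ht) _
      refine reachesWithin_succ_of_forall hs fun l hl a' ha' => ih a' ?_
      obtain ⟨b', hb', hab'⟩ := hforth a (f a) (hf a) l a' ha'
      exact entryTime_le_coe_iff.mp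
        ((hf_le a' b' hab').trans (entryTime_le_coe_iff.mpr (h.of_succ ht hl hb')))
  refine ⟨SA, hSA, fun a b hab => ?_⟩
  calc entryTime δA SA HA OsA OtA a ≤ entryTime δB SB HB OsB OtB (f a) :=
        entryTime_le_of_forall_reachesWithin (hreach · a)
    _ ≤ entryTime δB SB HB OsB OtB b := hf_le a b hab

theorem TimeOptimal.entryTime_le_of_simulation {SA : QA → Set L}
    (hSA : TimeOptimal δA HA SA OsA OtA) (r : QA → QB → Prop)
    (hsafe : ∀ a b, r a b → HB b ∈ OsB → HA a ∈ OsA)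
    (htarget : ∀ a b, r a b → HB b ∈ OtB → HA a ∈ OtA)
    (hforth : ∀ a b, r a b → ∀ l, ∀ a' ∈ δA a l, ∃ b' ∈ δB b l, r a' b')
    (henab : ∀ a b, r a b → ∀ l, (δB b l).Nonempty → (δA a l).Nonempty)
    (htot : ∀ a, ∃ b, r a b) {SB : QB → Set L} (hSB : IsController δB SB)
    {a : QA} {b : QB} (hab : r a b) :
    entryTime δA SA HA OsA OtA a ≤ entryTime δB SB HB OsB OtB b := by
  obtain ⟨SA', hSA', hle⟩ :=
    exists_isController_entryTime_le r hsafe htarget hforth henab htot hSB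
  exact (hSA.2 SA' hSA' a).trans (hle a b hab)

end Simulation

namespace ApproxBisim

variable {Q₁ Q₂ L O : Type*} [MetricSpace O] {ε : ℝ} {δ₁ : Q₁ → L → Set Q₁} {H₁ : Q₁ → O}
  {δ₂ : Q₂ → L → Set Q₂} {H₂ : Q₂ → O} {R : Set (Q₁ × Q₂)}

theorem symm (hR : ApproxBisim ε δ₁ H₁ δ₂ H₂ R) :
    ApproxBisim ε δ₂ H₂ δ₁ H₁ (Prod.swap ⁻¹' R) := fun p hp =>
  ⟨dist_comm (H₁ p.2) (H₂ p.1) ▸ (hR _ hp).1, (hR _ hp).2.2, (hR _ hp).2.1⟩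

theorem entryTime_le (hR : ApproxBisim ε δ₁ H₁ δ₂ H₂ R) (htot : ∀ q₁, ∃ q₂, (q₁, q₂) ∈ R)
    {Os₁ Ot₁ Os₂ Ot₂ : Set O} {S₁ : Q₁ → Set L} (hS₁ : TimeOptimal δ₁ H₁ S₁ Os₁ Ot₁)
    {S₂ : Q₂ → Set L} (hS₂ : IsController δ₂ S₂)
    (hOs : ∀ o₁ o₂, dist o₁ o₂ ≤ ε → o₂ ∈ Os₂ → o₁ ∈ Os₁)
    (hOt : ∀ o₁ o₂, dist o₁ o₂ ≤ ε → o₂ ∈ Ot₂ → o₁ ∈ Ot₁) {q₁ : Q₁} {q₂ : Q₂}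
    (h : (q₁, q₂) ∈ R) :
    entryTime δ₁ S₁ H₁ Os₁ Ot₁ q₁ ≤ entryTime δ₂ S₂ H₂ Os₂ Ot₂ q₂ :=
  hS₁.entryTime_le_of_simulation (fun q₁ q₂ => (q₁, q₂) ∈ R)
    (fun _ _ hr => hOs _ _ (hR _ hr).1) (fun _ _ hr => hOt _ _ (hR _ hr).1)
    (fun _ _ hr => (hR _ hr).2.1)
    (fun _ _ hr l ⟨_, hb'⟩ => ((hR _ hr).2.2 l _ hb').imp fun _ ha' => ha'.1) htot hS₂ h

end ApproxBisim

theorem value_function_transfer_general {Q₁ Q₂ L O : Type*} [MetricSpace O]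
    (ε : ℝ) (δ₁ : Q₁ → L → Set Q₁) (H₁ : Q₁ → O)
    (δ₂ : Q₂ → L → Set Q₂) (H₂ : Q₂ → O) (R : Set (Q₁ × Q₂))
    (hR : ApproxBisim ε δ₁ H₁ δ₂ H₂ R)
    (hRtot₁ : ∀ q₁, ∃ q₂, (q₁, q₂) ∈ R) (hRtot₂ : ∀ q₂, ∃ q₁, (q₁, q₂) ∈ R)
    (Os Ot : Set O)
    (S₁ : Q₁ → Set L) (hS₁ : TimeOptimal δ₁ H₁ S₁ Os Ot)
    (S₂C : Q₂ → Set L) (hS₂C : TimeOptimal δ₂ H₂ S₂C (contr ε Os) (contr ε Ot))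
    (S₂E : Q₂ → Set L) (hS₂E : TimeOptimal δ₂ H₂ S₂E (expan ε Os) (expan ε Ot)) :
    ∀ p ∈ R,
      entryTime δ₁ S₁ H₁ Os Ot p.1 ≤
        entryTime δ₂ S₂C H₂ (contr ε Os) (contr ε Ot) p.2 ∧
      entryTime δ₂ S₂E H₂ (expan ε Os) (expan ε Ot) p.2 ≤
        entryTime δ₁ S₁ H₁ Os Ot p.1 := by
  intro p hp
  constructor
  · exact hR.entryTime_le hRtot₁ hS₁ hS₂C.1 (fun o₁ _ hd ho => ho.2 o₁ hd)
      (fun o₁ _ hd ho => ho.2 o₁ hd) hp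
  · exact hR.symm.entryTime_le hRtot₂ hS₂E hS₁.1 (fun _ o₂ hd ho => ⟨o₂, ho, hd⟩)
      (fun _ o₂ hd ho => ⟨o₂, ho, hd⟩) hp

theorem value_function_transfer {Q₁ Q₂ L O : Type*} [MetricSpace O]
    (ε : ℝ) (hε : 0 ≤ ε) (δ₁ : Q₁ → L → Set Q₁) (H₁ : Q₁ → O)
    (δ₂ : Q₂ → L → Set Q₂) (H₂ : Q₂ → O) (R : Set (Q₁ × Q₂))
    (hR : ApproxBisim ε δ₁ H₁ δ₂ H₂ R)
    (hRtot₁ : ∀ q₁, ∃ q₂, (q₁, q₂) ∈ R) (hRtot₂ : ∀ q₂, ∃ q₁, (q₁, q₂) ∈ R)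
    (hnb₁ : ∀ q : Q₁, ∃ l : L, (δ₁ q l).Nonempty)
    (hnb₂ : ∀ q : Q₂, ∃ l : L, (δ₂ q l).Nonempty)
    (Os Ot : Set O) (hOts : Ot ⊆ Os)
    (S₁ : Q₁ → Set L) (hS₁ : TimeOptimal δ₁ H₁ S₁ Os Ot)
    (S₂C : Q₂ → Set L) (hS₂C : TimeOptimal δ₂ H₂ S₂C (contr ε Os) (contr ε Ot))
    (S₂E : Q₂ → Set L) (hS₂E : TimeOptimal δ₂ H₂ S₂E (expan ε Os) (expan ε Ot)) :
    ∀ p ∈ R,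
      entryTime δ₁ S₁ H₁ Os Ot p.1 ≤
        entryTime δ₂ S₂C H₂ (contr ε Os) (contr ε Ot) p.2 ∧
      entryTime δ₂ S₂E H₂ (expan ε Os) (expan ε Ot) p.2 ≤
        entryTime δ₁ S₁ H₁ Os Ot p.1 :=
  value_function_transfer_general ε δ₁ H₁ δ₂ H₂ R hR hRtot₁ hRtot₂ Os Ot S₁ hS₁ S₂C hS₂C S₂E hS₂E
end
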